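/- In the two-sided weakly dependent Gaussian testing setup, suppose n_1 → ∞ and n_1/n → p_1 ∈ (0, 1] as n → ∞, and let μ_{(n_1)} = max{|μ_i| : i ∈ I_1}. If lim_{n_1→∞} √(2 log n_1)/μ_{(n_1)} < 1, then for both the two-sided adjusted Bonferroni procedure (cutoff c_Bon(2n, α)) and the two-sided Sidak procedure (cutoff c_Sid(2n, α)), AnyPwr_BS → 1 as n → ∞. -/

import Mathlib

/-!
The false null with the largest mean `|μ_i| = μ_(n₁)` is by itself rejected with probability
at least `Φ(μ_(n₁) - τ_n)`. A Gaussian Chernoff bound gives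
`c_Bon(m, α) ≤ √(2 log(m/ε))` with `ε = -log(1-α)`, and `exp(-s) ≤ 1 - s/2` gives
`c_Sid(m, α) ≤ c_Bon(2m, α)`, so both cutoffs are at most `√(2 log(C n))`. Since `n₁ ≥ p₁ n / 2`,
this is at most `θ √(2 log n₁)` for any `θ > 1`, whereas eventually `μ_(n₁) ≥ √(2 log n₁) / L'`
for some `L' < 1`. Hence `μ_(n₁) - τ_n ≥ (1/L' - θ) √(2 log n₁) → ∞`.
-/

open MeasureTheory ProbabilityTheory Filter Asymptotics Finset
open scoped Classical ENNReal NNReal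

/-- The standard normal cumulative distribution function `Φ`. -/
noncomputable def Phi (x : ℝ) : ℝ := (ProbabilityTheory.gaussianReal 0 1 (Set.Iic x)).toReal

/-- The inverse of the standard normal cdf, `Φ⁻¹`. -/
noncomputable def PhiInv : ℝ → ℝ := Function.invFun Phi

/-- The adjusted Bonferroni cutoff `c_Bon(n, α) = Φ⁻¹(1 − (−log(1−α))/n)`. -/
noncomputable def cBon (n : ℕ) (α : ℝ) : ℝ := PhiInv (1 - (-Real.log (1 - α)) / n)

/-- The Sidak cutoff `c_Sid(n, α) = Φ⁻¹((1−α)^{1/n})`. -/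
noncomputable def cSid (n : ℕ) (α : ℝ) : ℝ := PhiInv ((1 - α) ^ ((1 : ℝ) / n))

/-- `ρ_m = sup_i |ρ_{i, i+m}|`. -/
noncomputable def rhobar (ρ : ℕ → ℕ → ℝ) (m : ℕ) : ℝ := ⨆ i : ℕ, |ρ i (i + m)|

/-- `γ = sup_{m ≥ 1} ρ_m`. -/
noncomputable def gammaSup (ρ : ℕ → ℕ → ℝ) : ℝ := ⨆ m : ℕ, rhobar ρ (m + 1)

/-- `γ_m = sup_{j ≥ m} ρ_j`. -/
noncomputable def gammaTail (ρ : ℕ → ℕ → ℝ) (m : ℕ) : ℝ := ⨆ j : {j : ℕ // m ≤ j}, rhobar ρ (j : ℕ)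

/-- A weakly dependent standard Gaussian sequence: jointly Gaussian random variables,
each marginally `N(0,1)`, with correlations `ρ i j ∈ (−1,1)` for `i ≠ j`, such that
`γ = sup_{m ≥ 1} ρ_m < 1` and `ρ_m = o(1/log m)`, where `ρ_m = sup_i |ρ_{i,i+m}|`. -/
structure IsWeakDepStdGaussian {Ω : Type*} [MeasurableSpace Ω] (P : Measure Ω)
    (X : ℕ → Ω → ℝ) (ρ : ℕ → ℕ → ℝ) : Prop where
  meas : ∀ i, Measurable (X i)
  marginal : ∀ i, P.map (X i) = gaussianReal 0 1
  jointGaussian : ∀ (s : Finset ℕ) (c : ℕ → ℝ), ∃ (m : ℝ) (v : ℝ≥0),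
      P.map (fun ω => ∑ i ∈ s, c i * X i ω) = gaussianReal m v
  corr : ∀ i j, i ≠ j → ∫ ω, X i ω * X j ω ∂P = ρ i j
  corr_lt : ∀ i j, i ≠ j → |ρ i j| < 1
  sup_lt_one : gammaSup ρ < 1
  weakDep : (fun m : ℕ => rhobar ρ m) =o[atTop] (fun m : ℕ => 1 / Real.log m)

lemma continuous_cdf (ν : Measure ℝ) [IsProbabilityMeasure ν] [NullSingletonClass ν] :
    Continuous (cdf ν) := by
  refine continuous_iff_continuousAt.2 fun x => ?_
  have hatom := (cdf ν).measure_singleton x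
  rw [measure_cdf, measure_singleton, eq_comm, ENNReal.ofReal_eq_zero, sub_nonpos] at hatom
  rw [(monotone_cdf ν).continuousAt_iff_leftLim_eq_rightLim, (cdf ν).rightLim_eq]
  exact le_antisymm ((monotone_cdf ν).leftLim_le le_rfl) hatom

lemma strictMono_cdf (ν : Measure ℝ) [IsProbabilityMeasure ν] (hν : volume ≪ ν) :
    StrictMono (cdf ν) := by
  intro a b hab
  have hpos : ν (Set.Ioc a b) ≠ 0 := fun h0 =>
    (not_le.2 hab) (by simpa using hν h0)
  rwa [← measure_cdf ν, StieltjesFunction.measure_Ioc, ne_eq, ENNReal.ofReal_eq_zero, not_le,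
    sub_pos] at hpos

instance : NullSingletonClass (gaussianReal 0 1) := nullSingletonClass_gaussianReal one_ne_zero

lemma Phi_eq_cdf : Phi = cdf (gaussianReal 0 1) :=
  funext fun x => (cdf_eq_real _ x).symm

lemma continuous_Phi : Continuous Phi := Phi_eq_cdf ▸ continuous_cdf (gaussianReal 0 1)

lemma strictMono_Phi : StrictMono Phi :=
  Phi_eq_cdf ▸ strictMono_cdf _ (gaussianReal_absolutelyContinuous' 0 one_ne_zero)

lemma tendsto_Phi_atTop : Tendsto Phi atTop (nhds 1) := Phi_eq_cdf ▸ tendsto_cdf_atTop _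

lemma tendsto_Phi_atBot : Tendsto Phi atBot (nhds 0) := Phi_eq_cdf ▸ tendsto_cdf_atBot _

lemma Phi_PhiInv {q : ℝ} (hq : q ∈ Set.Ioo 0 1) : Phi (PhiInv q) = q := by
  refine Function.invFun_eq (mem_range_of_exists_le_of_exists_ge continuous_Phi ?_ ?_)
  · exact (tendsto_Phi_atBot.eventually_le_const hq.1).exists
  · exact (tendsto_Phi_atTop.eventually_const_le hq.2).exists

lemma PhiInv_le_of_le_Phi {q x : ℝ} (hq : q ∈ Set.Ioo 0 1) (h : q ≤ Phi x) : PhiInv q ≤ x :=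
  strictMono_Phi.le_iff_le.1 (by rwa [Phi_PhiInv hq])

lemma one_sub_Phi_le_exp {x : ℝ} (hx : 0 ≤ x) : 1 - Phi x ≤ Real.exp (-x ^ 2 / 2) := by
  have htail : 1 - Phi x = (gaussianReal 0 1).real (Set.Ioi x) := by
    rw [Phi, ← measureReal_def, ← Set.compl_Iic, measureReal_compl measurableSet_Iic,
      probReal_univ]
  calc 1 - Phi x ≤ (gaussianReal 0 1).real {y | x ≤ y} :=
        htail ▸ measureReal_mono fun y (hy : x < y) => hy.le
    _ ≤ Real.exp (-x * x) * mgf id (gaussianReal 0 1) x :=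
        measure_ge_le_exp_mul_mgf x hx (integrable_exp_mul_gaussianReal x)
    _ = Real.exp (-x ^ 2 / 2) := by
        rw [mgf_id_gaussianReal, ← Real.exp_add]
        congr 1
        push_cast
        ring

lemma measureReal_Ioi_gaussianReal (x : ℝ) :
    (gaussianReal 0 1).real (Set.Ioi x) = Phi (-x) := by
  conv_lhs => rw [← neg_zero, ← gaussianReal_map_neg]
  rw [measureReal_def, Measure.map_apply measurable_neg measurableSet_Ioi, Phi,
    measure_congr Iio_ae_eq_Iic.symm]
  congr 2
  ext y
  simp

lemma ProbabilityTheory.HasLaw.measureReal_lt_eq_Phi {Ω : Type*} [MeasurableSpace Ω]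
    {P : Measure Ω} {Z : Ω → ℝ} (hZ : HasLaw Z (gaussianReal 0 1) P) (t : ℝ) :
    P.real {ω | t < Z ω} = Phi (-t) := by
  rw [measureReal_def, hZ.measure_eq measurableSet_Ioi, ← measureReal_def]
  exact measureReal_Ioi_gaussianReal t

lemma exists_abs_eq_sSup {μ : ℕ → ℝ} {n : ℕ} (hn : ∃ i < n, μ i ≠ 0) :
    ∃ i < n, μ i ≠ 0 ∧ |μ i| = sSup ((fun i => |μ i|) '' {i : ℕ | i < n ∧ μ i ≠ 0}) := by
  have hfin : {i : ℕ | i < n ∧ μ i ≠ 0}.Finite := (Set.finite_lt_nat n).subset fun i hi => hi.1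
  obtain ⟨i, hi⟩ := hn
  obtain ⟨j, ⟨hjn, hj⟩, hmax⟩ :=
    (Set.nonempty_of_mem (Set.mem_image_of_mem (fun i => |μ i|) hi)).csSup_mem (hfin.image _)
  exact ⟨j, hjn, hj, hmax⟩

section AnyPower

variable {Ω : Type*} [MeasurableSpace Ω] {P : Measure Ω} [IsFiniteMeasure P]

lemma Phi_abs_sub_le_measureReal_lt_abs {f : Ω → ℝ} {m : ℝ}
    (hf : HasLaw (fun ω => f ω - m) (gaussianReal 0 1) P) (τ : ℝ) :
    Phi (|m| - τ) ≤ P.real {ω | τ < |f ω|} := by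
  obtain ⟨Z, hZ, hZf⟩ : ∃ Z : Ω → ℝ, HasLaw Z (gaussianReal 0 1) P ∧ ∀ ω, Z ω + |m| ≤ |f ω| := by
    rcases le_total 0 m with hm | hm
    · exact ⟨_, hf, fun ω => by rw [abs_of_nonneg hm]; linarith [le_abs_self (f ω)]⟩
    · refine ⟨_, by simpa using gaussianReal_neg hf, fun ω => ?_⟩
      rw [Pi.neg_apply, abs_of_nonpos hm]
      linarith [neg_le_abs (f ω)]
  calc Phi (|m| - τ) = P.real {ω | τ - |m| < Z ω} := by rw [hZ.measureReal_lt_eq_Phi, neg_sub]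
    _ ≤ P.real {ω | τ < |f ω|} :=
        measureReal_mono fun ω (hω : τ - |m| < Z ω) => show τ < |f ω| by linarith [hZf ω]

lemma Phi_sSup_sub_le_measureReal {X : ℕ → Ω → ℝ} {μ : ℕ → ℝ}
    (hX : ∀ i, HasLaw (fun ω => X i ω - μ i) (gaussianReal 0 1) P) {n : ℕ}
    (hn : ∃ i < n, μ i ≠ 0) (τ : ℝ) :
    Phi (sSup ((fun i => |μ i|) '' {i : ℕ | i < n ∧ μ i ≠ 0}) - τ) ≤
      P.real {ω | ∃ i < n, μ i ≠ 0 ∧ τ < |X i ω|} := by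
  obtain ⟨i, hin, hi, hmax⟩ := exists_abs_eq_sSup hn
  rw [← hmax]
  exact (Phi_abs_sub_le_measureReal_lt_abs (hX i) τ).trans
    (measureReal_mono fun ω hω => ⟨i, hin, hi, hω⟩)

end AnyPower

section Cutoffs

variable {α : ℝ}

lemma neg_log_one_sub_pos (hα : α ∈ Set.Ioo 0 1) : 0 < -Real.log (1 - α) :=
  neg_pos.2 (Real.log_neg (by linarith [hα.2]) (by linarith [hα.1]))

lemma cBon_le_sqrt_two_log (hα : α ∈ Set.Ioo 0 1) {m : ℕ} (hm : -Real.log (1 - α) < m) :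
    cBon m α ≤ Real.sqrt (2 * Real.log (m / -Real.log (1 - α))) := by
  set ε := -Real.log (1 - α)
  have hε : 0 < ε := neg_log_one_sub_pos hα
  have hmε : 1 < m / ε := (one_lt_div hε).2 hm
  have hlog : 0 ≤ 2 * Real.log (m / ε) := by have := Real.log_pos hmε; positivity
  set x := Real.sqrt (2 * Real.log (m / ε))
  have htail : 1 - Phi x ≤ ε / m := by
    calc 1 - Phi x ≤ Real.exp (-x ^ 2 / 2) := one_sub_Phi_le_exp (Real.sqrt_nonneg _)
      _ = ε / m := by
        rw [Real.sq_sqrt hlog, show -(2 * Real.log (m / ε)) / 2 = -Real.log (m / ε) by ring,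
          Real.exp_neg, Real.exp_log (by linarith), inv_div]
  have hεm : ε / m < 1 := by rwa [div_lt_one (hε.trans hm)]
  exact PhiInv_le_of_le_Phi ⟨by linarith, by linarith [div_pos hε (hε.trans hm)]⟩ (by linarith)

lemma cSid_le_cBon_two_mul (hα : α ∈ Set.Ioo 0 1) {m : ℕ} (hm : -Real.log (1 - α) ≤ m) :
    cSid m α ≤ cBon (2 * m) α := by
  set ε := -Real.log (1 - α)
  have hε : 0 < ε := neg_log_one_sub_pos hα
  set s := ε / m
  have hs : 0 < s := div_pos hε (hε.trans_le hm)
  have hs1 : s ≤ 1 := (div_le_one (hε.trans_le hm)).2 hm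
  have hsid : (1 - α) ^ ((1 : ℝ) / m) = Real.exp (-s) := by
    rw [Real.rpow_def_of_pos (by linarith [hα.2])]
    congr 1
    simp only [s, ε]
    ring
  have hbon : 1 - ε / ((2 * m : ℕ) : ℝ) = 1 - s / 2 := by
    push_cast
    simp only [s]
    ring
  -- `exp (-s) ≤ 1 / (1 + s) ≤ 1 - s / 2` on `[0, 1]`
  have hexp : Real.exp (-s) ≤ 1 - s / 2 := by
    have h1 := Real.add_one_le_exp s
    have h2 : Real.exp (-s) * Real.exp s = 1 := by
      rw [← Real.exp_add, neg_add_cancel, Real.exp_zero]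
    nlinarith [Real.exp_pos (-s)]
  rw [cSid, cBon, hsid, hbon]
  refine PhiInv_le_of_le_Phi ⟨Real.exp_pos _, by linarith⟩ ?_
  rwa [Phi_PhiInv ⟨by linarith, by linarith⟩]

lemma eventually_cBon_le (hα : α ∈ Set.Ioo 0 1) :
    ∀ᶠ n : ℕ in atTop,
      cBon (2 * n) α ≤ Real.sqrt (2 * Real.log (2 / -Real.log (1 - α) * n)) := by
  filter_upwards [tendsto_natCast_atTop_atTop.eventually_gt_atTop (-Real.log (1 - α))]
    with n hn
  refine (cBon_le_sqrt_two_log hα (by push_cast; linarith)).trans_eq ?_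
  push_cast
  ring_nf

lemma eventually_cSid_le (hα : α ∈ Set.Ioo 0 1) :
    ∀ᶠ n : ℕ in atTop,
      cSid (2 * n) α ≤ Real.sqrt (2 * Real.log (4 / -Real.log (1 - α) * n)) := by
  filter_upwards [tendsto_natCast_atTop_atTop.eventually_gt_atTop (-Real.log (1 - α))]
    with n hn
  refine (cSid_le_cBon_two_mul hα (by push_cast; linarith)).trans <|
    (cBon_le_sqrt_two_log hα (by push_cast; linarith)).trans_eq ?_
  push_cast
  ring_nf

end Cutoffs

section Asymptotics

variable {N : ℕ → ℝ} {p : ℝ}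

lemma eventually_sqrt_two_log_le (hp : 0 < p) (hN : ∀ᶠ n : ℕ in atTop, p * n ≤ N n)
    {C θ : ℝ} (hC : 0 < C) (hθ : 1 < θ) :
    ∀ᶠ n : ℕ in atTop,
      Real.sqrt (2 * Real.log (C * n)) ≤ θ * Real.sqrt (2 * Real.log (N n)) := by
  have hθ2 : 0 < θ ^ 2 - 1 := by nlinarith
  filter_upwards [hN, eventually_gt_atTop 0,
    (Real.tendsto_log_atTop.comp tendsto_natCast_atTop_atTop).eventually_ge_atTop
      ((Real.log C - θ ^ 2 * Real.log p) / (θ ^ 2 - 1))] with n hpN hn hlogn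
  have hn' : (0 : ℝ) < n := Nat.cast_pos.2 hn
  have hlogN : Real.log p + Real.log n ≤ Real.log (N n) := by
    rw [← Real.log_mul hp.ne' hn'.ne']
    exact Real.log_le_log (by positivity) hpN
  have hlogn' := (div_le_iff₀ hθ2).1 hlogn
  have hkey : 2 * Real.log (C * n) ≤ θ ^ 2 * (2 * Real.log (N n)) := by
    rw [Real.log_mul hC.ne' hn'.ne']
    simp only [Function.comp_apply] at hlogn'
    nlinarith
  calc Real.sqrt (2 * Real.log (C * n)) ≤ Real.sqrt (θ ^ 2 * (2 * Real.log (N n))) :=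
        Real.sqrt_le_sqrt hkey
    _ = θ * Real.sqrt (2 * Real.log (N n)) := by
        rw [Real.sqrt_mul (sq_nonneg θ), Real.sqrt_sq (by linarith)]

lemma tendsto_sub_sqrt_two_log_atTop (hp : 0 < p) (hN : ∀ᶠ n : ℕ in atTop, p * n ≤ N n)
    {M : ℕ → ℝ} (hM : ∀ᶠ n in atTop, 0 < M n) {L : ℝ} (hL : L < 1)
    (hratio : Tendsto (fun n => Real.sqrt (2 * Real.log (N n)) / M n) atTop (nhds L))
    {C : ℝ} (hC : 0 < C) :
    Tendsto (fun n : ℕ => M n - Real.sqrt (2 * Real.log (C * n))) atTop atTop := by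
  obtain ⟨L', hLL', hL'1⟩ := exists_between (max_lt hL one_pos)
  have hL' : 0 < L' := (le_max_right L 0).trans_lt hLL'
  obtain ⟨θ, hθ, hθL'⟩ := exists_between (one_lt_one_div hL' hL'1)
  have hs : Tendsto (fun n => Real.sqrt (2 * Real.log (N n))) atTop atTop :=
    Real.tendsto_sqrt_atTop.comp <| (Real.tendsto_log_atTop.comp <| tendsto_atTop_mono' _ hN <|
      tendsto_natCast_atTop_atTop.const_mul_atTop hp).const_mul_atTop two_pos
  have hMs : ∀ᶠ n in atTop, Real.sqrt (2 * Real.log (N n)) / L' ≤ M n := by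
    filter_upwards [hratio.eventually_lt_const ((le_max_left L 0).trans_lt hLL'), hM] with n hn hMn
    rw [div_le_iff₀ hL']
    rw [div_lt_iff₀ hMn] at hn
    nlinarith
  refine tendsto_atTop_mono' _ ?_ (hs.const_mul_atTop (sub_pos.2 hθL'))
  filter_upwards [hMs, eventually_sqrt_two_log_le hp hN hC hθ] with n hMn hcn
  rw [div_eq_mul_one_div] at hMn
  nlinarith

end Asymptotics

lemma tendsto_measureReal_exists_lt_abs_one {Ω : Type*} [MeasurableSpace Ω] {P : Measure Ω}
    [IsProbabilityMeasure P] {X : ℕ → Ω → ℝ} {μ : ℕ → ℝ}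
    (hX : ∀ i, HasLaw (fun ω => X i ω - μ i) (gaussianReal 0 1) P) {p : ℝ} (hp : 0 < p)
    (hp_lim : Tendsto
      (fun n : ℕ => ((((Finset.range n).filter (fun i => μ i ≠ 0)).card : ℝ) / n))
      atTop (nhds p))
    {L : ℝ} (hL : L < 1)
    (hratio : Tendsto
      (fun n : ℕ =>
        Real.sqrt (2 * Real.log (((Finset.range n).filter (fun i => μ i ≠ 0)).card : ℝ)) /
          sSup ((fun i => |μ i|) '' {i : ℕ | i < n ∧ μ i ≠ 0}))
      atTop (nhds L))
    {τ : ℕ → ℝ} {C : ℝ} (hC : 0 < C)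
    (hτ : ∀ᶠ n : ℕ in atTop, τ n ≤ Real.sqrt (2 * Real.log (C * n))) :
    Tendsto (fun n => P.real {ω | ∃ i < n, μ i ≠ 0 ∧ τ n < |X i ω|}) atTop (nhds 1) := by
  set N : ℕ → ℝ := fun n => (((Finset.range n).filter (fun i => μ i ≠ 0)).card : ℝ)
  set M : ℕ → ℝ := fun n => sSup ((fun i => |μ i|) '' {i : ℕ | i < n ∧ μ i ≠ 0})
  have hN : ∀ᶠ n : ℕ in atTop, p / 2 * n ≤ N n := by
    filter_upwards [hp_lim.eventually_const_lt (half_lt_self hp), eventually_gt_atTop 0]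
      with n hn hn0
    exact ((lt_div_iff₀ (Nat.cast_pos.2 hn0)).1 hn).le
  have hnonempty : ∀ᶠ n in atTop, ∃ i < n, μ i ≠ 0 := by
    filter_upwards [hp_lim.eventually_const_lt hp] with n hn
    have hcard : 0 < ((Finset.range n).filter (fun i => μ i ≠ 0)).card :=
      Nat.pos_of_ne_zero fun h0 => by simp [h0] at hn
    obtain ⟨i, hi⟩ := Finset.card_pos.1 hcard
    exact ⟨i, by simpa using hi⟩
  have hM : ∀ᶠ n in atTop, 0 < M n := by
    filter_upwards [hnonempty] with n hn
    obtain ⟨i, -, hi, hmax⟩ := exists_abs_eq_sSup hn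
    exact (abs_pos.2 hi).trans_eq hmax
  have hPhi : Tendsto (fun n : ℕ => Phi (M n - Real.sqrt (2 * Real.log (C * n)))) atTop (nhds 1) :=
    tendsto_Phi_atTop.comp (tendsto_sub_sqrt_two_log_atTop (half_pos hp) hN hM hL hratio hC)
  refine tendsto_of_tendsto_of_tendsto_of_le_of_le' hPhi tendsto_const_nhds ?_
    (Eventually.of_forall fun n => measureReal_le_one)
  filter_upwards [hnonempty, hτ] with n hn hτn
  exact (strictMono_Phi.monotone (by linarith)).trans (Phi_sSup_sub_le_measureReal hX hn (τ n))

theorem anypwr_bs_max_mean_general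
    {Ω : Type*} [MeasurableSpace Ω] (P : Measure Ω) [IsProbabilityMeasure P]
    (X : ℕ → Ω → ℝ) (μ : ℕ → ℝ) (ρ : ℕ → ℕ → ℝ)
    (hX : IsWeakDepStdGaussian P (fun i ω => X i ω - μ i) ρ)
    (α : ℝ) (hα : α ∈ Set.Ioo (0 : ℝ) 1)
    (p₁ : ℝ) (hp₁ : p₁ ∈ Set.Ioc (0 : ℝ) 1)
    (hp₁lim : Tendsto
      (fun n : ℕ => ((((Finset.range n).filter (fun i => μ i ≠ 0)).card : ℝ) / n))
      atTop (nhds p₁))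
    (hratio : ∃ L < (1 : ℝ), Tendsto
      (fun n : ℕ =>
        Real.sqrt (2 * Real.log (((Finset.range n).filter (fun i => μ i ≠ 0)).card : ℝ)) /
          sSup ((fun i => |μ i|) '' {i : ℕ | i < n ∧ μ i ≠ 0}))
      atTop (nhds L)) :
    Tendsto (fun n : ℕ => (P {ω | ∃ i < n, μ i ≠ 0 ∧ cBon (2 * n) α < |X i ω|}).toReal)
        atTop (nhds 1) ∧
    Tendsto (fun n : ℕ => (P {ω | ∃ i < n, μ i ≠ 0 ∧ cSid (2 * n) α < |X i ω|}).toReal)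
        atTop (nhds 1) := by
  obtain ⟨L, hL, hratio⟩ := hratio
  have hlaw : ∀ i, HasLaw (fun ω => X i ω - μ i) (gaussianReal 0 1) P :=
    fun i => ⟨(hX.meas i).aemeasurable, hX.marginal i⟩
  have hε := neg_log_one_sub_pos hα
  exact ⟨tendsto_measureReal_exists_lt_abs_one hlaw hp₁.1 hp₁lim hL hratio (by positivity)
      (eventually_cBon_le hα),
    tendsto_measureReal_exists_lt_abs_one hlaw hp₁.1 hp₁lim hL hratio (by positivity)
      (eventually_cSid_le hα)⟩

/-- Two-sided power: if `n₁ → ∞`, `n₁/n → p₁ ∈ (0,1]`, and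
`lim √(2 log n₁)/μ_{(n₁)} < 1` where `μ_{(n₁)} = max{|μ i| : i ∈ I₁}`, then for both two-sided
procedures (cutoffs `c_Bon(2n, α)` and `c_Sid(2n, α)`), `AnyPwr_BS → 1`. -/
theorem anypwr_bs_max_mean
    {Ω : Type*} [MeasurableSpace Ω] (P : Measure Ω) [IsProbabilityMeasure P]
    (X : ℕ → Ω → ℝ) (μ : ℕ → ℝ) (ρ : ℕ → ℕ → ℝ)
    (hX : IsWeakDepStdGaussian P (fun i ω => X i ω - μ i) ρ)
    (α : ℝ) (hα : α ∈ Set.Ioo (0 : ℝ) 1)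
    (hn1 : Tendsto
      (fun n : ℕ => ((Finset.range n).filter (fun i => μ i ≠ 0)).card) atTop atTop)
    (p₁ : ℝ) (hp₁ : p₁ ∈ Set.Ioc (0 : ℝ) 1)
    (hp₁lim : Tendsto
      (fun n : ℕ => ((((Finset.range n).filter (fun i => μ i ≠ 0)).card : ℝ) / n))
      atTop (nhds p₁))
    (hratio : ∃ L < (1 : ℝ), Tendsto
      (fun n : ℕ =>
        Real.sqrt (2 * Real.log (((Finset.range n).filter (fun i => μ i ≠ 0)).card : ℝ)) /
          sSup ((fun i => |μ i|) '' {i : ℕ | i < n ∧ μ i ≠ 0}))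
      atTop (nhds L)) :
    Tendsto (fun n : ℕ => (P {ω | ∃ i < n, μ i ≠ 0 ∧ cBon (2 * n) α < |X i ω|}).toReal)
        atTop (nhds 1) ∧
    Tendsto (fun n : ℕ => (P {ω | ∃ i < n, μ i ≠ 0 ∧ cSid (2 * n) α < |X i ω|}).toReal)
        atTop (nhds 1) :=
  anypwr_bs_max_mean_general P X μ ρ hX α hα p₁ hp₁ hp₁lim hratio
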